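/- For perfect transmission T = 1 and atomic detection efficiency η_a = 0.9, there exist α > 0 and ν ∈ ℝ such that 0.9·√(c₁(α,1)²·sin²(2ν) + erf(α/√2)²) + 0.1·erf(α/√2)·cos(2ν) > 1; that is, with two homodyne measurements and 90% efficient atomic detection, a CHSH violation S_γ > 2 is achievable. -/

import Mathlib

/-!
Take `α = 2` and `ν = π/6`, so that `sin 2ν = √3/2` and `cos 2ν = 1/2`.

The Gaussian tail bound `∫ₓ^∞ e^{-t²} dt ≤ ∫ₓ^∞ (t/x) e^{-t²} dt = e^{-x²}/(2x)` together with
`∫₀^∞ e^{-t²} dt = √π/2` gives `erf x ≥ 1 - e^{-x²}/(x√π)`, hence `erf √2 > 0.945`.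

For `c₁(α,1)` the integrand `e^{-x²} cos(√2αx)` is nonnegative on the binning interval `[-b, b]`,
which contains `[-1/α, 1/α]` because `2√2 ≤ π`. On the smaller interval
`e^{-x²} ≥ 1 - x²` and `cos(√2αx) ≥ 1 - α²x² ≥ 0`, and integrating the product polynomial gives
`c₁(α,1) ≥ (2/√π)(4/(3α) - 4/(15α³)) - e^{-α²/2}`, hence `c₁(2,1) > 0.578`.
These two bounds make the left-hand side exceed `1.009`.
-/

open Real

/-- Error function `erf x = (2/√π)·∫₀ˣ e^{−t²} dt`. -/
noncomputable def erf (x : ℝ) : ℝ :=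
  (2 / Real.sqrt π) * ∫ t in (0 : ℝ)..x, Real.exp (-t ^ 2)

/-- Homodyne binning parameter at transmission `T`: `b = π/(2√2·√T·α)`. -/
noncomputable def bT (α T : ℝ) : ℝ := π / (2 * Real.sqrt 2 * (Real.sqrt T * α))

/-- Homodyne interference coefficient at transmission `T`:
`c₁(α,T) = e^{−(1−T)α²/2}·[(2/√π)·∫_{−b}^{b} e^{−x²} cos(√2 x √T α) dx − e^{−Tα²/2}]`. -/
noncomputable def c1T (α T : ℝ) : ℝ :=
  Real.exp (-(1 - T) * α ^ 2 / 2) *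
    ((2 / Real.sqrt π) *
        (∫ x in (-bT α T)..(bT α T),
          Real.exp (-x ^ 2) * Real.cos (Real.sqrt 2 * x * (Real.sqrt T * α)))
      - Real.exp (-T * α ^ 2 / 2))

open MeasureTheory Set Filter Topology

lemma hasDerivAt_neg_exp_neg_sq_div_two (t : ℝ) :
    HasDerivAt (fun t => -exp (-t ^ 2) / 2) (t * exp (-t ^ 2)) t := by
  have h : HasDerivAt (fun t : ℝ => -t ^ 2) (-(2 * t)) t := by
    simpa using (hasDerivAt_pow 2 t).fun_neg
  exact (h.exp.fun_neg.div_const 2).congr_deriv (by ring)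

lemma tendsto_neg_exp_neg_sq_div_two_atTop :
    Tendsto (fun t : ℝ => -exp (-t ^ 2) / 2) atTop (𝓝 0) := by
  simpa [Function.comp_def] using
    (tendsto_exp_neg_atTop_nhds_zero.comp (tendsto_pow_atTop two_ne_zero)).neg.div_const 2

lemma integrable_exp_neg_sq : Integrable (fun t : ℝ => exp (-t ^ 2)) := by
  simpa using integrable_exp_neg_mul_sq one_pos

lemma integrableOn_Ioi_mul_exp_neg_sq {x : ℝ} (hx : 0 ≤ x) :
    IntegrableOn (fun t => t * exp (-t ^ 2)) (Ioi x) :=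
  integrableOn_Ioi_deriv_of_nonneg' (fun t _ => hasDerivAt_neg_exp_neg_sq_div_two t)
    (fun _ ht => mul_nonneg (hx.trans_lt ht).le (exp_pos _).le) tendsto_neg_exp_neg_sq_div_two_atTop

lemma integral_Ioi_mul_exp_neg_sq {x : ℝ} (hx : 0 ≤ x) :
    ∫ t in Ioi x, t * exp (-t ^ 2) = exp (-x ^ 2) / 2 := by
  rw [integral_Ioi_of_hasDerivAt_of_tendsto' (fun t _ => hasDerivAt_neg_exp_neg_sq_div_two t)
    (integrableOn_Ioi_mul_exp_neg_sq hx) tendsto_neg_exp_neg_sq_div_two_atTop]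
  ring

lemma integral_Ioi_exp_neg_sq_le {x : ℝ} (hx : 0 < x) :
    ∫ t in Ioi x, exp (-t ^ 2) ≤ exp (-x ^ 2) / (2 * x) := by
  have hmono : ∫ t in Ioi x, x * exp (-t ^ 2) ≤ ∫ t in Ioi x, t * exp (-t ^ 2) :=
    setIntegral_mono_on (integrable_exp_neg_sq.integrableOn.const_mul x)
      (integrableOn_Ioi_mul_exp_neg_sq hx.le) measurableSet_Ioi
      fun _ ht => mul_le_mul_of_nonneg_right (le_of_lt ht) (exp_pos _).le
  rw [integral_const_mul, integral_Ioi_mul_exp_neg_sq hx.le] at hmono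
  rw [le_div_iff₀ (by positivity)]
  linarith

lemma one_sub_exp_div_le_erf {x : ℝ} (hx : 0 < x) :
    1 - exp (-x ^ 2) / (x * √π) ≤ erf x := by
  have hhalf : ∫ t in Ioi (0 : ℝ), exp (-t ^ 2) = √π / 2 := by
    simpa using integral_gaussian_Ioi 1
  have htail := integral_Ioi_exp_neg_sq_le hx
  unfold erf
  rw [← intervalIntegral.integral_Ioi_sub_Ioi integrable_exp_neg_sq.integrableOn hx.le, hhalf]
  have hscaled := mul_le_mul_of_nonneg_left htail (by positivity : 0 ≤ 2 / √π)
  calc 1 - exp (-x ^ 2) / (x * √π) = 1 - 2 / √π * (exp (-x ^ 2) / (2 * x)) := by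
        field_simp
    _ ≤ 2 / √π * (√π / 2 - ∫ t in Ioi x, exp (-t ^ 2)) := by
        have : 2 / √π * (√π / 2) = 1 := by field_simp
        rw [mul_sub, this]
        linarith

lemma c1T_one (α : ℝ) :
    c1T α 1 = 2 / √π * (∫ x in -(π / (2 * √2 * α))..π / (2 * √2 * α),
      exp (-x ^ 2) * cos (√2 * x * α)) - exp (-α ^ 2 / 2) := by
  simp [c1T, bT]

lemma exp_neg_sq_mul_cos_nonneg {α x : ℝ} (hα : 0 < α) (hx : |x| ≤ π / (2 * √2 * α)) :
    0 ≤ exp (-x ^ 2) * cos (√2 * x * α) := by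
  have hz : |√2 * x * α| ≤ π / 2 := by
    rw [abs_mul, abs_mul, abs_of_pos (by positivity : (0 : ℝ) < √2), abs_of_pos hα]
    rw [le_div_iff₀ (by positivity)] at hx
    linarith
  exact mul_nonneg (exp_pos _).le (cos_nonneg_of_mem_Icc (abs_le.mp hz))

lemma one_sub_sq_mul_le_exp_neg_sq_mul_cos {α x : ℝ} (hx : α ^ 2 * x ^ 2 ≤ 1) :
    (1 - x ^ 2) * (1 - α ^ 2 * x ^ 2) ≤ exp (-x ^ 2) * cos (√2 * x * α) := by
  have hcos : 1 - α ^ 2 * x ^ 2 ≤ cos (√2 * x * α) := by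
    have h := one_sub_sq_div_two_le_cos (x := √2 * x * α)
    rw [mul_pow, mul_pow, sq_sqrt zero_le_two] at h
    linarith
  have hexp : 1 - x ^ 2 ≤ exp (-x ^ 2) := by linarith [add_one_le_exp (-x ^ 2)]
  calc (1 - x ^ 2) * (1 - α ^ 2 * x ^ 2) ≤ exp (-x ^ 2) * (1 - α ^ 2 * x ^ 2) :=
        mul_le_mul_of_nonneg_right hexp (by linarith)
    _ ≤ exp (-x ^ 2) * cos (√2 * x * α) := mul_le_mul_of_nonneg_left hcos (exp_pos _).le

lemma integral_one_sub_sq_mul_one_sub_mul_sq {α : ℝ} (hα : 0 < α) :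
    ∫ x in -α⁻¹..α⁻¹, (1 - x ^ 2) * (1 - α ^ 2 * x ^ 2) = 4 / (3 * α) - 4 / (15 * α ^ 3) := by
  have hderiv : ∀ x ∈ uIcc (-α⁻¹) α⁻¹, HasDerivAt
      (fun x => x - (1 + α ^ 2) * x ^ 3 / 3 + α ^ 2 * x ^ 5 / 5)
      ((1 - x ^ 2) * (1 - α ^ 2 * x ^ 2)) x := by
    intro x _
    refine (((hasDerivAt_id x).sub ((hasDerivAt_pow 3 x).const_mul _ |>.div_const 3)).add
      ((hasDerivAt_pow 5 x).const_mul _ |>.div_const 5)).congr_deriv ?_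
    push_cast
    ring
  rw [intervalIntegral.integral_eq_sub_of_hasDerivAt hderiv
    ((by fun_prop : Continuous _).intervalIntegrable _ _)]
  field_simp
  ring

lemma le_c1T_one {α : ℝ} (hα : 0 < α) :
    2 / √π * (4 / (3 * α) - 4 / (15 * α ^ 3)) - exp (-α ^ 2 / 2) ≤ c1T α 1 := by
  set b := π / (2 * √2 * α)
  have hcont : Continuous fun x : ℝ => exp (-x ^ 2) * cos (√2 * x * α) := by fun_prop
  have hinv_le_b : α⁻¹ ≤ b := by
    have h2 : 2 * √2 ≤ π := by nlinarith [sq_sqrt (zero_le_two (α := ℝ)), sqrt_nonneg 2, pi_gt_three]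
    rw [le_div_iff₀ (by positivity), inv_mul_le_iff₀ hα]
    nlinarith
  have hpoly : ∫ x in -α⁻¹..α⁻¹, (1 - x ^ 2) * (1 - α ^ 2 * x ^ 2)
      ≤ ∫ x in -α⁻¹..α⁻¹, exp (-x ^ 2) * cos (√2 * x * α) := by
    refine intervalIntegral.integral_mono_on (by linarith [inv_pos.2 hα])
      ((by fun_prop : Continuous _).intervalIntegrable _ _) (hcont.intervalIntegrable _ _) ?_
    intro x hx
    have hupper := mul_le_mul_of_nonneg_left hx.2 hα.le
    have hlower := mul_le_mul_of_nonneg_left hx.1 hα.le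
    rw [mul_inv_cancel₀ hα.ne'] at hupper
    rw [mul_neg, mul_inv_cancel₀ hα.ne'] at hlower
    exact one_sub_sq_mul_le_exp_neg_sq_mul_cos (by nlinarith)
  have hwiden : ∫ x in -α⁻¹..α⁻¹, exp (-x ^ 2) * cos (√2 * x * α)
      ≤ ∫ x in -b..b, exp (-x ^ 2) * cos (√2 * x * α) := by
    refine intervalIntegral.integral_mono_interval (by linarith) (by linarith [inv_pos.2 hα])
      hinv_le_b ?_ (hcont.intervalIntegrable _ _)
    refine (ae_restrict_iff' measurableSet_Ioc).2 (Eventually.of_forall fun x hx => ?_)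
    exact exp_neg_sq_mul_cos_nonneg hα (abs_le.2 ⟨hx.1.le, hx.2⟩)
  rw [c1T_one, ← integral_one_sub_sq_mul_one_sub_mul_sq hα]
  gcongr
  exact hpoly.trans hwiden

lemma exp_neg_two_le : exp (-2) ≤ 0.1354 := by
  have he : (2.7182818283 : ℝ) ^ 2 ≤ exp 2 := by
    rw [show (2 : ℝ) = 1 + 1 by norm_num, exp_add, ← sq]
    exact pow_le_pow_left₀ (by norm_num) exp_one_gt_d9.le 2
  rw [exp_neg, inv_le_comm₀ (exp_pos 2) (by norm_num)]
  linarith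

lemma le_erf_sqrt_two : 0.945 ≤ erf √2 := by
  have hden : 2.5 ≤ √2 * √π := by
    rw [← sqrt_mul zero_le_two, le_sqrt (by norm_num) (by positivity)]
    linarith [pi_gt_d2]
  have h := one_sub_exp_div_le_erf (sqrt_pos.2 (zero_lt_two (α := ℝ)))
  rw [sq_sqrt zero_le_two] at h
  have htail : exp (-2) / (√2 * √π) ≤ 0.1354 / 2.5 :=
    div_le_div₀ (by norm_num) exp_neg_two_le (by norm_num) hden
  linarith

lemma le_c1T_two_one : 0.578 ≤ c1T 2 1 := by
  have hpi : √π ≤ 1.7725 := by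
    rw [sqrt_le_left (by norm_num)]
    linarith [pi_lt_d4]
  have hfac : 1.128 ≤ 2 / √π := by
    rw [le_div_iff₀ (by positivity)]
    linarith
  have h := le_c1T_one (zero_lt_two (α := ℝ))
  norm_num at h
  linarith [exp_neg_two_le]

/-- At perfect transmission `T = 1` with atomic detection efficiency `η_a = 0.9`, there exist
`α > 0` and `ν` such that
`0.9·√(c₁(α,1)²·sin²(2ν) + erf(α/√2)²) + 0.1·erf(α/√2)·cos(2ν) > 1`, i.e. the two-homodyne
Bell test with 90% efficient atomic detection achieves `S_γ > 2`. -/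
theorem two_homodyne_violation_atomic_efficiency_0_9 :
    ∃ α > (0 : ℝ), ∃ ν : ℝ,
      0.9 * Real.sqrt ((c1T α 1) ^ 2 * Real.sin (2 * ν) ^ 2
          + (erf (α / Real.sqrt 2)) ^ 2)
        + 0.1 * erf (α / Real.sqrt 2) * Real.cos (2 * ν) > 1 := by
  refine ⟨2, two_pos, π / 6, ?_⟩
  have hangle : 2 * (π / 6) = π / 3 := by ring
  have harg : (2 : ℝ) / √2 = √2 := div_sqrt
  rw [hangle, sin_pi_div_three, cos_pi_div_three, harg, div_pow, sq_sqrt zero_le_three]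
  have hC := le_c1T_two_one
  have hE := le_erf_sqrt_two
  have hroot : 1.069 ≤ √(c1T 2 1 ^ 2 * (3 / 2 ^ 2) + erf √2 ^ 2) := by
    rw [le_sqrt (by norm_num) (by positivity)]
    nlinarith
  linarith
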